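/- Let n ≥ 2 and let R_n denote the quotient of the polynomial ring ℚ[x_1,…,x_{n−1}] by the ideal generated by the n−1 elements x_i·(2x_i − x_{i−1} − x_{i+1}) for 1 ≤ i ≤ n−1, with the convention x_0 = x_n = 0. Then the images in R_n of the 2^{n−1} square-free monomials ∏_{i∈L} x_i, for L ranging over all subsets of {1,…,n−1}, form a basis of R_n as a ℚ-vector space; in particular dim_ℚ R_n = 2^{n−1}. -/

import Mathlib

/-!
Spanning: modulo the ideal, `2 x_i² t = x_{i-1} x_i t + x_{i+1} x_i t`. So a linear functional that
vanishes on the squarefree classes takes, on the monomials of a fixed degree, values that are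
averages of two neighbours at every non-squarefree monomial, one of the neighbours having a smaller
index sum. A monomial of maximal absolute value and minimal index sum therefore cannot exist unless
all values vanish.

Independence: `R_n` acts on the vector space with basis `e_S`, `S ⊆ {1, …, n-1}`, by
`x_i e_S = e_{S ∪ {i}}` for `i ∉ S` (with `e_{S ∪ {0}} = e_{S ∪ {n}} = 0`), extended affinely in `i`
along each maximal run of `S`, which is exactly what makes `i ↦ x_i e_S` harmonic on `S`. Two such
operators commute because their commutator, applied to `e_S`, is harmonic in either index on `S`
and vanishes off `S`, and a function on `ℕ` harmonic on a finite set avoiding `0` and vanishing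
off it is zero. Evaluation at `e_∅` then sends the class of `∏_{i ∈ L} x_i` to `e_L`.
-/

noncomputable section

/-- The variable `x_i` of `ℚ[x_1, …, x_{n-1}]` for `1 ≤ i ≤ n-1`, with the convention
`x_0 = x_n = 0` (indeed `x_i = 0` for all `i` outside `{1, …, n-1}`). -/
def petersonX (n : ℕ) (i : ℕ) : MvPolynomial (Fin (n - 1)) ℚ :=
  if h : 1 ≤ i ∧ i ≤ n - 1 then MvPolynomial.X ⟨i - 1, by omega⟩ else 0

/-- The ideal of `ℚ[x_1, …, x_{n-1}]` generated by the `n-1` elements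
`x_i (2x_i − x_{i−1} − x_{i+1})` for `1 ≤ i ≤ n-1`, with `x_0 = x_n = 0`. -/
def petersonIdeal (n : ℕ) : Ideal (MvPolynomial (Fin (n - 1)) ℚ) :=
  Ideal.span
    ((fun i => petersonX n i * (2 * petersonX n i - petersonX n (i - 1) - petersonX n (i + 1))) ''
      ↑(Finset.Icc 1 (n - 1)))

open Finset

namespace Peterson

section MaximumPrinciple

variable {K : Type*} [Field K] [LinearOrder K] [IsStrictOrderedRing K]

theorem eq_zero_of_forall_add_eq_two_mul {α : Type*} (s : Finset α) (f : α → K) (w : α → ℕ)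
    (h : ∀ a ∈ s, f a ≠ 0 → ∃ b ∈ s, ∃ c ∈ s, w b < w a ∧ f b + f c = 2 * f a) :
    ∀ a ∈ s, f a = 0 := by
  by_contra! ⟨a₀, ha₀, hfa₀⟩
  set M := s.sup' ⟨a₀, ha₀⟩ (|f ·|)
  obtain ⟨a₁, ha₁, hfa₁⟩ := exists_mem_eq_sup' ⟨a₀, ha₀⟩ (|f ·|)
  obtain ⟨a, ha, hwa⟩ := exists_min_image {a ∈ s | |f a| = M} w
    ⟨a₁, mem_filter.mpr ⟨ha₁, hfa₁.symm⟩⟩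
  rw [mem_filter] at ha
  have hM : 0 < M := (abs_pos.mpr hfa₀).trans_le (le_sup' (|f ·|) ha₀)
  obtain ⟨b, hb, c, hc, hwb, hbc⟩ := h a ha.1 (abs_pos.mp (ha.2 ▸ hM))
  have hfb : |f b| = M := by
    refine le_antisymm (le_sup' (|f ·|) hb) ?_
    have := abs_add_le (f b) (f c)
    rw [hbc, abs_mul, ha.2, abs_two] at this
    linarith [le_sup' (|f ·|) hc]
  exact (hwa b (mem_filter.mpr ⟨hb, hfb⟩)).not_gt hwb

theorem eq_zero_of_harmonic {V : Type*} [AddCommGroup V] [Module K V] {S : Finset ℕ}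
    (hS : 0 ∉ S) {h : ℕ → V} (h_out : ∀ i ∉ S, h i = 0)
    (h_harm : ∀ i ∈ S, h (i - 1) + h (i + 1) = (2 : K) • h i) (i : ℕ) : h i = 0 := by
  rw [← Module.forall_dual_apply_eq_zero_iff K]
  intro ψ
  by_cases hi : i ∈ range (S.sup id + 2)
  · refine eq_zero_of_forall_add_eq_two_mul _ (fun i => ψ (h i)) id ?_ i hi
    intro a _ hfa
    have haS : a ∈ S := by_contra fun haS => hfa (by simp [h_out a haS])
    have hpos : 0 < a := Nat.pos_of_ne_zero fun h0 => hS (h0 ▸ haS)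
    have hle : a ≤ S.sup id := le_sup (f := id) haS
    refine ⟨a - 1, mem_range.mpr (by omega), a + 1, mem_range.mpr (by omega),
      Nat.sub_lt hpos one_pos, ?_⟩
    simp only [← map_add, h_harm a haS, map_smul, smul_eq_mul]
  · have : i ∉ S := fun hiS => hi (by simpa using (le_sup (f := id) hiS).trans_lt (by omega))
    simp [h_out i this]

end MaximumPrinciple

theorem petersonX_of_notMem {n i : ℕ} (hi : i ∉ Icc 1 (n - 1)) : petersonX n i = 0 :=
  dif_neg (by simpa using hi)

theorem petersonX_succ {n : ℕ} (j : Fin (n - 1)) : petersonX n (j + 1) = MvPolynomial.X j := by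
  rw [petersonX, dif_pos (by omega)]
  rfl

theorem petersonX_mul_mem_petersonIdeal {n i : ℕ} (hi : i ∈ Icc 1 (n - 1)) :
    petersonX n i * (2 * petersonX n i - petersonX n (i - 1) - petersonX n (i + 1)) ∈
      petersonIdeal n :=
  Ideal.subset_span ⟨i, hi, rfl⟩

def petersonProd (n : ℕ) (m : Multiset ℕ) : MvPolynomial (Fin (n - 1)) ℚ :=
  (m.map (petersonX n)).prod

theorem petersonProd_cons (n i : ℕ) (m : Multiset ℕ) :
    petersonProd n (i ::ₘ m) = petersonX n i * petersonProd n m := by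
  simp [petersonProd]

theorem petersonProd_eq_zero {n x : ℕ} {m : Multiset ℕ} (hx : x ∈ m) (hx' : x ∉ Icc 1 (n - 1)) :
    petersonProd n m = 0 :=
  Multiset.prod_eq_zero (Multiset.mem_map.mpr ⟨x, hx, petersonX_of_notMem hx'⟩)

theorem span_range_petersonProd (n : ℕ) : Submodule.span ℚ (Set.range (petersonProd n)) = ⊤ := by
  have hclosure : (Submonoid.closure (Set.range (MvPolynomial.X (R := ℚ) (σ := Fin (n - 1)))) :
      Set (MvPolynomial (Fin (n - 1)) ℚ)) ⊆ Set.range (petersonProd n) := by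
    intro p hp
    induction hp using Submonoid.closure_induction with
    | mem _ hp =>
      obtain ⟨j, rfl⟩ := hp
      exact ⟨{(j : ℕ) + 1}, by simp [petersonProd, petersonX_succ]⟩
    | one => exact ⟨0, by simp [petersonProd]⟩
    | mul _ _ _ _ hp hq =>
      obtain ⟨⟨m₁, rfl⟩, ⟨m₂, rfl⟩⟩ := And.intro hp hq
      exact ⟨m₁ + m₂, by simp [petersonProd]⟩
  refine eq_top_iff.mpr (le_of_eq_of_le ?_ (Submodule.span_mono hclosure))
  rw [← Algebra.adjoin_eq_span, MvPolynomial.adjoin_range_X, Algebra.top_toSubmodule]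

theorem mk_petersonProd_harmonic {n i : ℕ} (hi : i ∈ Icc 1 (n - 1)) (t : Multiset ℕ) :
    Ideal.Quotient.mk (petersonIdeal n) (petersonProd n ((i - 1) ::ₘ i ::ₘ t)) +
        Ideal.Quotient.mk (petersonIdeal n) (petersonProd n ((i + 1) ::ₘ i ::ₘ t)) =
      2 * Ideal.Quotient.mk (petersonIdeal n) (petersonProd n (i ::ₘ i ::ₘ t)) := by
  rw [← map_add, ← map_ofNat (Ideal.Quotient.mk _) 2, ← map_mul, Ideal.Quotient.eq]
  convert neg_mem (Ideal.mul_mem_right (petersonProd n t) _ (petersonX_mul_mem_petersonIdeal hi))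
    using 1
  simp only [petersonProd_cons]
  ring

theorem mem_image_sym_range {d N : ℕ} {m : Multiset ℕ} :
    m ∈ ((range (N + 1)).sym d).image (↑) ↔ Multiset.card m = d ∧ ∀ x ∈ m, x ≤ N := by
  simp only [mem_image, mem_sym_iff, mem_range, Nat.lt_succ_iff]
  constructor
  · rintro ⟨z, hz, rfl⟩
    exact ⟨z.2, hz⟩
  · rintro ⟨hcard, hle⟩
    exact ⟨⟨m, hcard⟩, hle, rfl⟩

theorem dual_mk_petersonProd_eq_zero {n : ℕ}
    (φ : Module.Dual ℚ (MvPolynomial (Fin (n - 1)) ℚ ⧸ petersonIdeal n))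
    (hφ : ∀ L ⊆ Icc 1 (n - 1), φ (Ideal.Quotient.mk _ (∏ i ∈ L, petersonX n i)) = 0)
    (m : Multiset ℕ) : φ (Ideal.Quotient.mk _ (petersonProd n m)) = 0 := by
  by_cases hm : ∀ x ∈ m, x ≤ n
  swap
  · push Not at hm
    obtain ⟨x, hx, hxn⟩ := hm
    rw [petersonProd_eq_zero hx (by rw [mem_Icc]; omega), map_zero, map_zero]
  refine eq_zero_of_forall_add_eq_two_mul (((range (n + 1)).sym m.card).image (↑))
    (fun a => φ (Ideal.Quotient.mk _ (petersonProd n a))) Multiset.sum ?_ m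
    (mem_image_sym_range.mpr ⟨rfl, hm⟩)
  intro a ha hfa
  obtain ⟨hcard, hle⟩ := mem_image_sym_range.mp ha
  have hIcc : ∀ x ∈ a, x ∈ Icc 1 (n - 1) := fun x hx =>
    by_contra fun hx' => hfa (by simp [petersonProd_eq_zero hx hx'])
  have hdup : ¬ a.Nodup := fun hnd => hfa <| by
    simpa [petersonProd, prod_eq_multiset_prod] using hφ ⟨a, hnd⟩ hIcc
  obtain ⟨i, t, rfl⟩ : ∃ i t, a = i ::ₘ i ::ₘ t := by
    simpa [Multiset.nodup_iff_ne_cons_cons] using hdup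
  have hi := hIcc i (Multiset.mem_cons_self i _)
  have hi' := mem_Icc.mp hi
  refine ⟨(i - 1) ::ₘ i ::ₘ t, mem_image_sym_range.mpr ⟨by simpa using hcard, ?_⟩,
    (i + 1) ::ₘ i ::ₘ t, mem_image_sym_range.mpr ⟨by simpa using hcard, ?_⟩,
    by simp only [Multiset.sum_cons]; omega, ?_⟩
  iterate 2 · simp only [Multiset.forall_mem_cons] at hle ⊢; exact ⟨by omega, hle.2⟩
  rw [← map_add, mk_petersonProd_harmonic hi, two_mul, map_add, two_mul]

theorem span_squarefree_eq_top (n : ℕ) :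
    Submodule.span ℚ
      ((fun L : Finset ℕ => Ideal.Quotient.mk (petersonIdeal n) (∏ i ∈ L, petersonX n i)) ''
        ↑(Icc 1 (n - 1)).powerset) = ⊤ := by
  set U := Submodule.span ℚ
      ((fun L : Finset ℕ => Ideal.Quotient.mk (petersonIdeal n) (∏ i ∈ L, petersonX n i)) ''
        ↑(Icc 1 (n - 1)).powerset)
  have hmem : ∀ m, Ideal.Quotient.mk _ (petersonProd n m) ∈ U := by
    intro m
    rw [← Submodule.Quotient.mk_eq_zero, ← Module.forall_dual_apply_eq_zero_iff ℚ]
    intro ψ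
    refine dual_mk_petersonProd_eq_zero (ψ.comp U.mkQ) (fun L hL => ?_) m
    rw [LinearMap.comp_apply, Submodule.mkQ_apply, (Submodule.Quotient.mk_eq_zero U).mpr
      (Submodule.subset_span ⟨L, mem_powerset.mpr hL, rfl⟩), map_zero]
  have hsurj : LinearMap.range (Ideal.Quotient.mkₐ ℚ (petersonIdeal n)).toLinearMap = ⊤ :=
    LinearMap.range_eq_top.mpr (Ideal.Quotient.mkₐ_surjective ℚ _)
  rw [eq_top_iff, ← hsurj, LinearMap.range_eq_map, ← span_range_petersonProd, Submodule.map_span,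
    Submodule.span_le]
  rintro _ ⟨_, ⟨m, rfl⟩, rfl⟩
  exact hmem m

theorem exists_ge_notMem (S : Finset ℕ) (i : ℕ) : ∃ q, i ≤ q ∧ q ∉ S := by
  obtain ⟨q, hq⟩ := Infinite.exists_notMem_finset (S ∪ range i)
  simp only [mem_union, mem_range, not_or, not_lt] at hq
  exact ⟨q, hq.2, hq.1⟩

def prevGap (S : Finset ℕ) (i : ℕ) : ℕ := Nat.findGreatest (· ∉ S) i

def nextGap (S : Finset ℕ) (i : ℕ) : ℕ := Nat.find (exists_ge_notMem S i)

theorem prevGap_eq {S : Finset ℕ} {p i : ℕ} (hp : p ≤ i) (hpS : p ∉ S)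
    (h : ∀ t, p < t → t ≤ i → t ∈ S) : prevGap S i = p :=
  Nat.findGreatest_eq_iff.mpr ⟨hp, fun _ => hpS, fun t ht hti => not_not.mpr (h t ht hti)⟩

theorem nextGap_eq {S : Finset ℕ} {q i : ℕ} (hq : i ≤ q) (hqS : q ∉ S)
    (h : ∀ t, i ≤ t → t < q → t ∈ S) : nextGap S i = q :=
  (Nat.find_eq_iff _).mpr ⟨⟨hq, hqS⟩, fun t ht hit => hit.2 (h t hit.1 ht)⟩

theorem prevGap_spec {S : Finset ℕ} (hS : 0 ∉ S) (i : ℕ) :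
    prevGap S i ≤ i ∧ prevGap S i ∉ S ∧ ∀ t, prevGap S i < t → t ≤ i → t ∈ S :=
  ⟨Nat.findGreatest_le i, Nat.findGreatest_spec (P := (· ∉ S)) (Nat.zero_le i) hS,
    fun _ ht hti => not_not.mp (Nat.findGreatest_is_greatest ht hti)⟩

theorem nextGap_spec (S : Finset ℕ) (i : ℕ) :
    i ≤ nextGap S i ∧ nextGap S i ∉ S ∧ ∀ t, i ≤ t → t < nextGap S i → t ∈ S :=
  ⟨(Nat.find_spec (exists_ge_notMem S i)).1, (Nat.find_spec (exists_ge_notMem S i)).2,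
    fun _ hit ht => by_contra fun htS => Nat.find_min (exists_ge_notMem S i) ht ⟨hit, htS⟩⟩

theorem prevGap_of_notMem {S : Finset ℕ} {i : ℕ} (hi : i ∉ S) : prevGap S i = i :=
  prevGap_eq le_rfl hi fun _ h h' => absurd (h.trans_le h') (lt_irrefl _)

theorem nextGap_of_notMem {S : Finset ℕ} {i : ℕ} (hi : i ∉ S) : nextGap S i = i :=
  nextGap_eq le_rfl hi fun _ h h' => absurd (h.trans_lt h') (lt_irrefl _)

section Operators

variable (n : ℕ)

def singleInsert (S : Finset ℕ) (t : ℕ) : Finset ℕ →₀ ℚ :=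
  if t ∈ Icc 1 (n - 1) then Finsupp.single (insert t S) 1 else 0

def petersonAct (i : ℕ) (S : Finset ℕ) : Finset ℕ →₀ ℚ :=
  if S ⊆ Icc 1 (n - 1) then
    AffineMap.lineMap (singleInsert n S (prevGap S i)) (singleInsert n S (nextGap S i))
      (((i : ℚ) - prevGap S i) / ((nextGap S i : ℚ) - prevGap S i))
  else 0

variable {n}

theorem petersonAct_of_notMem {S : Finset ℕ} (hS : S ⊆ Icc 1 (n - 1)) {i : ℕ} (hi : i ∉ S) :
    petersonAct n i S = singleInsert n S i := by
  rw [petersonAct, if_pos hS, prevGap_of_notMem hi, nextGap_of_notMem hi, sub_self, zero_div,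
    AffineMap.lineMap_apply_zero]

theorem petersonAct_eq_lineMap {S : Finset ℕ} (hS : S ⊆ Icc 1 (n - 1)) {i t : ℕ} (hi : i ∈ S)
    (hpt : prevGap S i ≤ t) (htq : t ≤ nextGap S i) :
    petersonAct n t S =
      AffineMap.lineMap (singleInsert n S (prevGap S i)) (singleInsert n S (nextGap S i))
      (((t : ℚ) - prevGap S i) / ((nextGap S i : ℚ) - prevGap S i)) := by
  have h0 : (0 : ℕ) ∉ S := fun h => by simpa using hS h
  obtain ⟨hp, hpS, hp'⟩ := prevGap_spec h0 i
  obtain ⟨hq, hqS, hq'⟩ := nextGap_spec S i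
  have hrun : ∀ s, prevGap S i < s → s < nextGap S i → s ∈ S := fun s h h' =>
    (le_total s i).elim (hp' s h) (hq' s · h')
  by_cases htS : t ∈ S
  · have hpt' : prevGap S i < t := hpt.lt_of_ne (by rintro rfl; exact hpS htS)
    have htq' : t < nextGap S i := htq.lt_of_ne (by rintro rfl; exact hqS htS)
    rw [petersonAct, if_pos hS, prevGap_eq hpt hpS fun s h h' => hrun s h (h'.trans_lt htq'),
      nextGap_eq htq hqS fun s h h' => hrun s (hpt'.trans_le h) h']
  · rw [petersonAct_of_notMem hS htS]
    obtain rfl | rfl : t = prevGap S i ∨ t = nextGap S i := by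
      by_contra! h
      exact htS (hrun t (hpt.lt_of_ne h.1.symm) (htq.lt_of_ne h.2))
    · rw [sub_self, zero_div, AffineMap.lineMap_apply_zero]
    · have hpq : (prevGap S i : ℚ) < nextGap S i := by
        exact_mod_cast (hp.lt_of_ne fun h => hpS (by rwa [h])).trans_le hq
      rw [div_self (sub_ne_zero.mpr hpq.ne'), AffineMap.lineMap_apply_one]

theorem petersonAct_harmonic {T : Finset ℕ} {i : ℕ} (hi : i ∈ T) :
    petersonAct n (i - 1) T + petersonAct n (i + 1) T = (2 : ℚ) • petersonAct n i T := by
  by_cases hT : T ⊆ Icc 1 (n - 1)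
  swap
  · simp [petersonAct, hT]
  have h0 : (0 : ℕ) ∉ T := fun h => by simpa using hT h
  obtain ⟨hp, hpT, -⟩ := prevGap_spec h0 i
  obtain ⟨hq, hqT, -⟩ := nextGap_spec T i
  have hpi : prevGap T i < i := hp.lt_of_ne fun h => hpT (by rwa [h])
  have hiq : i < nextGap T i := hq.lt_of_ne fun h => hqT (by rwa [← h])
  rw [petersonAct_eq_lineMap hT hi (t := i - 1) (by omega) (by omega),
    petersonAct_eq_lineMap hT hi (t := i + 1) (by omega) (by omega),
    petersonAct_eq_lineMap hT hi (t := i) hp hq]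
  simp only [AffineMap.lineMap_apply_module, Nat.cast_add, Nat.cast_one, Nat.cast_sub hpi.pos]
  module

theorem singleInsert_mem_supported (S : Finset ℕ) (t : ℕ) :
    singleInsert n S t ∈ Finsupp.supported ℚ ℚ {T | insert t S ⊆ T} := by
  unfold singleInsert
  split_ifs
  · exact Finsupp.single_mem_supported ℚ 1 (subset_refl (insert t S))
  · exact zero_mem _

theorem petersonAct_mem_supported (i : ℕ) (S : Finset ℕ) :
    petersonAct n i S ∈ Finsupp.supported ℚ ℚ {T | insert i S ⊆ T} := by
  by_cases hS : S ⊆ Icc 1 (n - 1)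
  swap
  · simp [petersonAct, hS, zero_mem]
  by_cases hi : i ∈ S
  · have hmono : ∀ t, Finsupp.supported ℚ ℚ {T | insert t S ⊆ T} ≤
        Finsupp.supported ℚ ℚ {T | insert i S ⊆ T} := fun t =>
      Finsupp.supported_mono fun T (hT : insert t S ⊆ T) => show insert i S ⊆ T by
        rw [insert_eq_of_mem hi]; exact (subset_insert t S).trans hT
    rw [petersonAct, if_pos hS, AffineMap.lineMap_apply_module]
    exact add_mem (Submodule.smul_mem _ _ (hmono _ (singleInsert_mem_supported S _)))
      (Submodule.smul_mem _ _ (hmono _ (singleInsert_mem_supported S _)))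
  · rw [petersonAct_of_notMem hS hi]
    exact singleInsert_mem_supported S i

variable (n) in
def petersonOp (i : ℕ) : Module.End ℚ (Finset ℕ →₀ ℚ) :=
  Finsupp.linearCombination ℚ (petersonAct n i)

theorem petersonOp_single (i : ℕ) (S : Finset ℕ) (c : ℚ) :
    petersonOp n i (Finsupp.single S c) = c • petersonAct n i S :=
  Finsupp.linearCombination_single ℚ c S

theorem petersonOp_mem_supported (i : ℕ) (v : Finset ℕ →₀ ℚ) :
    petersonOp n i v ∈ Finsupp.supported ℚ ℚ {T | i ∈ T} := by
  have hv : petersonOp n i v ∈ Submodule.span ℚ (Set.range (petersonAct n i)) := by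
    rw [← Finsupp.range_linearCombination]
    exact LinearMap.mem_range_self _ v
  refine Submodule.span_le.mpr ?_ hv
  rintro _ ⟨S, rfl⟩
  exact Finsupp.supported_mono
    (fun T (hT : insert i S ⊆ T) => show i ∈ T from hT (mem_insert_self i S))
    (petersonAct_mem_supported i S)

theorem petersonOp_harmonic {i : ℕ} {v : Finset ℕ →₀ ℚ}
    (hv : v ∈ Finsupp.supported ℚ ℚ {T | i ∈ T}) :
    petersonOp n (i - 1) v + petersonOp n (i + 1) v = (2 : ℚ) • petersonOp n i v := by
  suffices
      v ∈ LinearMap.ker (petersonOp n (i - 1) + petersonOp n (i + 1) - (2 : ℚ) • petersonOp n i) by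
    simpa [sub_eq_zero] using this
  refine (Finsupp.supported_eq_span_single ℚ _).le.trans (Submodule.span_le.mpr ?_) hv
  rintro _ ⟨T, hT, rfl⟩
  simp [petersonOp_single, petersonAct_harmonic hT]

theorem petersonOp_petersonAct_comm_of_notMem {S : Finset ℕ} (hS : S ⊆ Icc 1 (n - 1)) {i j : ℕ}
    (hi : i ∉ S) (hj : j ∉ S) :
    petersonOp n i (petersonAct n j S) = petersonOp n j (petersonAct n i S) := by
  rcases eq_or_ne i j with rfl | hij
  · rfl
  rw [petersonAct_of_notMem hS hi, petersonAct_of_notMem hS hj]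
  have hiS : i ∉ insert j S := by simp [hij, hi]
  have hjS : j ∉ insert i S := by simp [hij.symm, hj]
  by_cases hi' : i ∈ Icc 1 (n - 1) <;> by_cases hj' : j ∈ Icc 1 (n - 1)
  · simp only [singleInsert, if_pos hi', if_pos hj', petersonOp_single, one_smul,
      petersonAct_of_notMem (insert_subset hi' hS) hjS,
      petersonAct_of_notMem (insert_subset hj' hS) hiS, insert_comm]
  · simp [singleInsert, hi', hj', petersonOp_single,
      petersonAct_of_notMem (insert_subset hi' hS) hjS]
  · simp [singleInsert, hi', hj', petersonOp_single,
      petersonAct_of_notMem (insert_subset hj' hS) hiS]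
  · simp [singleInsert, hi', hj']

theorem petersonOp_petersonAct_sub_harmonic {S : Finset ℕ} {k : ℕ} (hk : k ∈ S) (j : ℕ) :
    (petersonOp n (k - 1) (petersonAct n j S) - petersonOp n j (petersonAct n (k - 1) S)) +
        (petersonOp n (k + 1) (petersonAct n j S) - petersonOp n j (petersonAct n (k + 1) S)) =
      (2 : ℚ) • (petersonOp n k (petersonAct n j S) - petersonOp n j (petersonAct n k S)) := by
  have hleft := petersonOp_harmonic (n := n) (Finsupp.supported_mono
    (fun T (hT : insert j S ⊆ T) => show k ∈ T from hT (mem_insert_of_mem hk))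
    (petersonAct_mem_supported (n := n) j S))
  have hright := congrArg (petersonOp n j) (petersonAct_harmonic (n := n) hk)
  rw [map_add, map_smul] at hright
  rw [smul_sub, ← hleft, ← hright]
  abel

theorem petersonOp_petersonAct_comm (S : Finset ℕ) (i j : ℕ) :
    petersonOp n i (petersonAct n j S) = petersonOp n j (petersonAct n i S) := by
  by_cases hS : S ⊆ Icc 1 (n - 1)
  swap
  · simp [petersonAct, hS]
  have h0 : (0 : ℕ) ∉ S := fun h => by simpa using hS h
  have h_notMem : ∀ i ∉ S, ∀ j, petersonOp n i (petersonAct n j S) =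
      petersonOp n j (petersonAct n i S) := fun i hi j =>
    (sub_eq_zero.mp (eq_zero_of_harmonic h0
      (h := fun j => petersonOp n j (petersonAct n i S) - petersonOp n i (petersonAct n j S))
      (fun j hj => sub_eq_zero.mpr (petersonOp_petersonAct_comm_of_notMem hS hj hi))
      (fun k hk => petersonOp_petersonAct_sub_harmonic hk i) j)).symm
  exact sub_eq_zero.mp (eq_zero_of_harmonic h0
    (h := fun i => petersonOp n i (petersonAct n j S) - petersonOp n j (petersonAct n i S))
    (fun i hi => sub_eq_zero.mpr (h_notMem i hi j))
    (fun k hk => petersonOp_petersonAct_sub_harmonic hk j) i)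

theorem petersonOp_commute (i j : ℕ) : Commute (petersonOp n i) (petersonOp n j) :=
  Finsupp.lhom_ext fun S c => by
    simp [petersonOp_single, petersonOp_petersonAct_comm S i j]

end Operators

theorem petersonOp_of_notMem {n i : ℕ} (hi : i ∉ Icc 1 (n - 1)) : petersonOp n i = 0 :=
  Finsupp.lhom_ext fun S c => by
    by_cases hS : S ⊆ Icc 1 (n - 1)
    · simp [petersonOp_single, petersonAct_of_notMem hS (fun h => hi (hS h)), singleInsert, hi]
    · simp [petersonOp_single, petersonAct, hS]

def petersonOpAlgebra (n : ℕ) : Subalgebra ℚ (Module.End ℚ (Finset ℕ →₀ ℚ)) :=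
  Algebra.adjoin ℚ (Set.range (petersonOp n))

instance (n : ℕ) : IsMulCommutative (petersonOpAlgebra n) :=
  Algebra.isMulCommutative_adjoin ℚ <| by
    rintro _ ⟨i, rfl⟩ _ ⟨j, rfl⟩
    exact petersonOp_commute i j

open scoped IsMulCommutative

def petersonOpHom (n : ℕ) : MvPolynomial (Fin (n - 1)) ℚ →ₐ[ℚ] petersonOpAlgebra n :=
  MvPolynomial.aeval fun j => ⟨petersonOp n (j + 1), Algebra.subset_adjoin ⟨_, rfl⟩⟩

theorem coe_petersonOpHom_petersonX (n i : ℕ) :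
    (petersonOpHom n (petersonX n i) : Module.End ℚ (Finset ℕ →₀ ℚ)) = petersonOp n i := by
  by_cases hi : i ∈ Icc 1 (n - 1)
  · have hi' := mem_Icc.mp hi
    obtain ⟨j, rfl⟩ : ∃ j : Fin (n - 1), (j : ℕ) + 1 = i :=
      ⟨⟨i - 1, by omega⟩, Nat.sub_add_cancel hi'.1⟩
    rw [petersonX_succ, petersonOpHom, MvPolynomial.aeval_X]
  · rw [petersonX_of_notMem hi, map_zero, petersonOp_of_notMem hi, ZeroMemClass.coe_zero]

theorem petersonIdeal_le_ker (n : ℕ) : petersonIdeal n ≤ RingHom.ker (petersonOpHom n) := by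
  refine Ideal.span_le.mpr ?_
  rintro _ ⟨i, -, rfl⟩
  rw [SetLike.mem_coe, RingHom.mem_ker]
  dsimp only
  rw [two_mul, map_mul, mul_comm, ← Subtype.val_inj]
  refine LinearMap.ext fun v => ?_
  have := petersonOp_harmonic (n := n) (petersonOp_mem_supported (n := n) i v)
  simp only [map_sub, map_add, MulMemClass.coe_mul, AddSubgroupClass.coe_sub, AddMemClass.coe_add,
    coe_petersonOpHom_petersonX, Module.End.mul_apply, LinearMap.sub_apply, LinearMap.add_apply,
    ZeroMemClass.coe_zero, LinearMap.zero_apply]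
  rw [sub_sub, this, two_smul, sub_self]

def petersonEval (n : ℕ) :
    (MvPolynomial (Fin (n - 1)) ℚ ⧸ petersonIdeal n) →ₗ[ℚ] Finset ℕ →₀ ℚ :=
  LinearMap.applyₗ (Finsupp.single ∅ 1) ∘ₗ (petersonOpAlgebra n).val.toLinearMap ∘ₗ
    (Ideal.Quotient.liftₐ _ (petersonOpHom n) (petersonIdeal_le_ker n)).toLinearMap

theorem petersonEval_mk (n : ℕ) (p : MvPolynomial (Fin (n - 1)) ℚ) :
    petersonEval n (Ideal.Quotient.mk _ p) =
      (petersonOpHom n p : Module.End ℚ (Finset ℕ →₀ ℚ)) (Finsupp.single ∅ 1) :=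
  rfl

theorem petersonEval_squarefree {n : ℕ} {L : Finset ℕ} (hL : L ⊆ Icc 1 (n - 1)) :
    petersonEval n (Ideal.Quotient.mk _ (∏ i ∈ L, petersonX n i)) = Finsupp.single L 1 := by
  induction L using Finset.induction_on with
  | empty => rw [prod_empty, petersonEval_mk, map_one, OneMemClass.coe_one, Module.End.one_apply]
  | insert k L hk ih =>
    obtain ⟨hk', hL'⟩ := insert_subset_iff.mp hL
    rw [petersonEval_mk] at ih ⊢
    rw [prod_insert hk, map_mul, Subalgebra.coe_mul, Module.End.mul_apply, ih hL',
      coe_petersonOpHom_petersonX, petersonOp_single, one_smul, petersonAct_of_notMem hL' hk,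
      singleInsert, if_pos hk']

theorem linearIndependent_squarefree (n : ℕ) :
    LinearIndependent ℚ (fun L : (Icc 1 (n - 1)).powerset =>
      Ideal.Quotient.mk (petersonIdeal n) (∏ i ∈ (L : Finset ℕ), petersonX n i)) := by
  refine LinearIndependent.of_comp (petersonEval n) ?_
  have : petersonEval n ∘ (fun L : (Icc 1 (n - 1)).powerset =>
      Ideal.Quotient.mk (petersonIdeal n) (∏ i ∈ (L : Finset ℕ), petersonX n i)) =
      fun L : (Icc 1 (n - 1)).powerset => Finsupp.single (L : Finset ℕ) (1 : ℚ) :=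
    funext fun L => petersonEval_squarefree (mem_powerset.mp L.2)
  rw [this]
  exact (Finsupp.basisSingleOne.linearIndependent).comp _ Subtype.val_injective

end Peterson

theorem squarefree_monomials_basis_general (n : ℕ) :
    (LinearIndependent ℚ
      (fun L : ((Finset.Icc 1 (n - 1)).powerset : Finset (Finset ℕ)) =>
        Ideal.Quotient.mk (petersonIdeal n) (∏ i ∈ (L : Finset ℕ), petersonX n i))) ∧
    Submodule.span ℚ
      ((fun L : Finset ℕ => Ideal.Quotient.mk (petersonIdeal n) (∏ i ∈ L, petersonX n i)) ''
        ↑(Finset.Icc 1 (n - 1)).powerset) = ⊤ ∧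
    Module.finrank ℚ (MvPolynomial (Fin (n - 1)) ℚ ⧸ petersonIdeal n) = 2 ^ (n - 1) := by
  have hind := Peterson.linearIndependent_squarefree n
  have hspan := Peterson.span_squarefree_eq_top n
  refine ⟨hind, hspan, ?_⟩
  rw [Set.image_eq_range] at hspan
  rw [Module.finrank_eq_card_basis (Module.Basis.mk hind hspan.ge), Fintype.card_coe, card_powerset,
    Nat.card_Icc, Nat.add_sub_cancel]

/-- For `n ≥ 2`, the images in `R_n = ℚ[x_1,…,x_{n-1}]/I_n` of the
`2^{n-1}` square-free monomials `∏_{i∈L} x_i`, for `L ⊆ {1,…,n-1}`, form a `ℚ`-basis of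
`R_n`; in particular `dim_ℚ R_n = 2^{n-1}`. -/
theorem squarefree_monomials_basis (n : ℕ) (hn : 2 ≤ n) :
    (LinearIndependent ℚ
      (fun L : ((Finset.Icc 1 (n - 1)).powerset : Finset (Finset ℕ)) =>
        Ideal.Quotient.mk (petersonIdeal n) (∏ i ∈ (L : Finset ℕ), petersonX n i))) ∧
    Submodule.span ℚ
      ((fun L : Finset ℕ => Ideal.Quotient.mk (petersonIdeal n) (∏ i ∈ L, petersonX n i)) ''
        ↑(Finset.Icc 1 (n - 1)).powerset) = ⊤ ∧
    Module.finrank ℚ (MvPolynomial (Fin (n - 1)) ℚ ⧸ petersonIdeal n) = 2 ^ (n - 1) :=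
  squarefree_monomials_basis_general n
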